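/- Let λ ≠ 0 be real and let q : [0,1] → ℝ satisfy the integral equation λ²·q(x) = λ·∫₀¹ q(t) dt − ∫₀^x s·q(s) ds for all x ∈ [0,1], with q not identically zero. Then q(x) = C·exp(−x²/(2λ²)) for a constant C ≠ 0, and λ satisfies erf(1/(√2·λ)) = √(2/π), where erf(x) = (2/√π)∫₀^x e^{−t²} dt. -/

import Mathlib

/-!
Differentiating the equation gives `λ² q' = -x q`, so `q · exp (x² / (2λ²))` has zero
derivative and `q` is a Gaussian. The only subtlety is that `∫ s in Icc 0 x, s * q s` is `0`
by convention when the integrand is not integrable; at such points the equation makes `q`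
constant, and since the points of integrability form an interval, `s * q s` is integrable
after all. Evaluating the equation at `x = 0` then gives `λ = ∫₀¹ exp (-t² / (2λ²)) dt`,
which the substitution `t = √2 λ u` turns into the stated value of `erf`.
-/

/-- The error function erf(x) = (2/√π)·∫₀ˣ exp(−t²) dt. -/
noncomputable def erf (x : ℝ) : ℝ :=
  2 / Real.sqrt Real.pi * ∫ t in (0 : ℝ)..x, Real.exp (-t ^ 2)

open MeasureTheory Set

section Volterra

variable {q : ℝ → ℝ} {a c d : ℝ}

theorem eq_mul_exp_of_hasDerivWithinAt (hq : ContinuousOn q (Icc 0 d))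
    (hderiv : ∀ x ∈ Ico 0 d, HasDerivWithinAt q (-(x * q x) / c) (Ici x) x) :
    ∀ x ∈ Icc 0 d, q x = q 0 * Real.exp (-x ^ 2 / (2 * c)) := by
  set E : ℝ → ℝ := fun u => Real.exp (u ^ 2 / (2 * c))
  have hconst : ∀ x ∈ Icc 0 d, q x * E x = q 0 * E 0 := by
    refine constant_of_has_deriv_right_zero (hq.mul (by fun_prop)) fun x hx => ?_
    have hE : HasDerivAt E (E x * (2 * x ^ 1 / (2 * c))) x :=
      ((hasDerivAt_pow 2 x).div_const (2 * c)).exp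
    exact ((hderiv x hx).mul hE.hasDerivWithinAt).congr_deriv (by ring)
  intro x hx
  have hEx : E x ≠ 0 := Real.exp_ne_zero _
  have hqx : q x = q 0 * (E x)⁻¹ := by
    rw [eq_mul_inv_iff_mul_eq₀ hEx, hconst x hx]
    simp [E]
  rw [hqx, neg_div, Real.exp_neg]

theorem eq_div_of_volterra (hc : c ≠ 0)
    (heq : ∀ x ∈ Icc 0 d, c * q x = a - ∫ s in Icc 0 x, s * q s) :
    ∀ x ∈ Icc 0 d, q x = (a - ∫ s in (0 : ℝ)..x, s * q s) / c := by
  intro x hx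
  rw [eq_div_iff hc, intervalIntegral.integral_of_le hx.1, ← integral_Icc_eq_integral_Ioc]
  linear_combination heq x hx

theorem continuousOn_of_volterra (hc : c ≠ 0)
    (heq : ∀ x ∈ Icc 0 d, c * q x = a - ∫ s in Icc 0 x, s * q s)
    (hint : IntegrableOn (fun s => s * q s) (Icc 0 d)) :
    ContinuousOn q (Icc 0 d) := by
  have hprim : ContinuousOn (fun x => ∫ s in (0 : ℝ)..x, s * q s) (Icc 0 d) := by
    refine (intervalIntegral.continuousOn_primitive_Icc hint).congr fun x hx => ?_
    simp only [intervalIntegral.integral_of_le hx.1, integral_Icc_eq_integral_Ioc]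
  exact ((continuousOn_const.sub hprim).div_const c).congr (eq_div_of_volterra hc heq)

theorem hasDerivWithinAt_of_volterra (hc : c ≠ 0)
    (heq : ∀ x ∈ Icc 0 d, c * q x = a - ∫ s in Icc 0 x, s * q s)
    (hint : IntegrableOn (fun s => s * q s) (Icc 0 d)) :
    ∀ x ∈ Ico 0 d, HasDerivWithinAt q (-(x * q x) / c) (Ici x) x := by
  intro x hx
  have hxd : x ∈ Icc 0 d := Ico_subset_Icc_self hx
  have hnhds : Icc 0 d ∈ nhdsWithin x (Ici x) := Icc_mem_nhdsGE_of_mem hx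
  have hnhds' : Icc 0 d ∈ nhdsWithin x (Ioi x) := nhdsWithin_mono x Ioi_subset_Ici_self hnhds
  have hfcont : ContinuousOn (fun s => s * q s) (Icc 0 d) :=
    continuousOn_id.mul (continuousOn_of_volterra hc heq hint)
  have hprim : HasDerivWithinAt (fun u => ∫ s in (0 : ℝ)..u, s * q s) (x * q x) (Ici x) x := by
    refine intervalIntegral.integral_hasDerivWithinAt_right ?_
      ⟨Icc 0 d, hnhds', hfcont.aestronglyMeasurable measurableSet_Icc⟩
      ((hfcont x hxd).mono_of_mem_nhdsWithin hnhds')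
    rw [intervalIntegrable_iff_integrableOn_Icc_of_le hx.1]
    exact hint.mono_set (Icc_subset_Icc_right hx.2.le)
  have hq := eq_div_of_volterra hc heq
  refine (((hasDerivWithinAt_const x _ a).sub hprim).div_const c).congr_of_eventuallyEq ?_ ?_
    |>.congr_deriv (by ring)
  · filter_upwards [hnhds] with u hu using hq u hu
  · exact hq x hxd

theorem eq_mul_exp_of_volterra_of_integrableOn (hc : c ≠ 0)
    (heq : ∀ x ∈ Icc 0 d, c * q x = a - ∫ s in Icc 0 x, s * q s)
    (hint : IntegrableOn (fun s => s * q s) (Icc 0 d)) :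
    ∀ x ∈ Icc 0 d, q x = q 0 * Real.exp (-x ^ 2 / (2 * c)) :=
  eq_mul_exp_of_hasDerivWithinAt (continuousOn_of_volterra hc heq hint)
    (hasDerivWithinAt_of_volterra hc heq hint)

theorem integrableOn_of_volterra (hc : c ≠ 0)
    (heq : ∀ x ∈ Icc 0 d, c * q x = a - ∫ s in Icc 0 x, s * q s) :
    IntegrableOn (fun s => s * q s) (Icc 0 d) := by
  set good : Set ℝ := {x | IntegrableOn (fun s => s * q s) (Icc 0 x)}
  have hgood : MeasurableSet good :=
    OrdConnected.measurableSet ⟨fun _ _ y hy _ hz => hy.mono_set (Icc_subset_Icc_right hz.2)⟩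
  have hq_good : ∀ x ∈ Icc 0 d ∩ good, x * q x = x * (q 0 * Real.exp (-x ^ 2 / (2 * c))) :=
    fun x ⟨hx, hxg⟩ => by
      rw [eq_mul_exp_of_volterra_of_integrableOn hc
        (fun y hy => heq y ⟨hy.1, hy.2.trans hx.2⟩) hxg x ⟨hx.1, le_rfl⟩]
  have hq_bad : ∀ x ∈ Icc 0 d \ good, x * q x = x * (a / c) := fun x ⟨hx, hxg⟩ => by
    have h := heq x hx
    rw [integral_undef hxg, sub_zero] at h
    rw [← h, mul_div_cancel_left₀ _ hc]
  rw [← inter_union_sdiff (Icc 0 d) good]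
  refine IntegrableOn.union ?_ ?_
  · refine IntegrableOn.congr_fun ?_ (fun x hx => (hq_good x hx).symm)
      (measurableSet_Icc.inter hgood)
    exact (Continuous.integrableOn_Icc (by fun_prop)).mono_set inter_subset_left
  · refine IntegrableOn.congr_fun ?_ (fun x hx => (hq_bad x hx).symm)
      (measurableSet_Icc.diff hgood)
    exact (Continuous.integrableOn_Icc (by fun_prop)).mono_set sdiff_subset

theorem eq_mul_exp_of_volterra (hc : c ≠ 0)
    (heq : ∀ x ∈ Icc 0 d, c * q x = a - ∫ s in Icc 0 x, s * q s) :
    ∀ x ∈ Icc 0 d, q x = q 0 * Real.exp (-x ^ 2 / (2 * c)) :=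
  eq_mul_exp_of_volterra_of_integrableOn hc heq (integrableOn_of_volterra hc heq)

end Volterra

theorem intervalIntegral_exp_neg_sq_div_eq_erf {lam : ℝ} (hlam : lam ≠ 0) (b : ℝ) :
    ∫ t in (0 : ℝ)..b, Real.exp (-t ^ 2 / (2 * lam ^ 2)) =
      Real.sqrt (Real.pi / 2) * lam * erf (b / (Real.sqrt 2 * lam)) := by
  have hs : Real.sqrt 2 * lam ≠ 0 := mul_ne_zero (by positivity) hlam
  have hsq : (Real.sqrt 2 * lam) ^ 2 = 2 * lam ^ 2 := by
    rw [mul_pow, Real.sq_sqrt zero_le_two]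
  have hpi : Real.sqrt (Real.pi / 2) * (2 / Real.sqrt Real.pi) = Real.sqrt 2 := by
    rw [Real.sqrt_div Real.pi_pos.le]
    field_simp
    rw [Real.sq_sqrt zero_le_two]
  calc ∫ t in (0 : ℝ)..b, Real.exp (-t ^ 2 / (2 * lam ^ 2))
      = ∫ t in (0 : ℝ)..b, Real.exp (-(t / (Real.sqrt 2 * lam)) ^ 2) := by
        simp only [div_pow, hsq, neg_div]
    _ = Real.sqrt 2 * lam * ∫ u in (0 : ℝ)..b / (Real.sqrt 2 * lam), Real.exp (-u ^ 2) := by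
        rw [intervalIntegral.integral_comp_div (fun u => Real.exp (-u ^ 2)) hs, zero_div,
          smul_eq_mul]
    _ = Real.sqrt (Real.pi / 2) * lam * erf (b / (Real.sqrt 2 * lam)) := by
        rw [erf, ← hpi]
        ring

theorem eigen_213_equation (lam : ℝ) (hlam : lam ≠ 0) (q : ℝ → ℝ)
    (heq : ∀ x ∈ Set.Icc (0 : ℝ) 1,
      lam ^ 2 * q x =
        lam * (∫ t in Set.Icc (0 : ℝ) 1, q t) - ∫ s in Set.Icc (0 : ℝ) x, s * q s)
    (hnontriv : ∃ x ∈ Set.Icc (0 : ℝ) 1, q x ≠ 0) :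
    (∃ C : ℝ, C ≠ 0 ∧ ∀ x ∈ Set.Icc (0 : ℝ) 1,
        q x = C * Real.exp (-x ^ 2 / (2 * lam ^ 2))) ∧
    erf (1 / (Real.sqrt 2 * lam)) = Real.sqrt (2 / Real.pi) := by
  have hq := eq_mul_exp_of_volterra (pow_ne_zero 2 hlam) heq
  have hq0 : q 0 ≠ 0 := by
    obtain ⟨x, hx, hqx⟩ := hnontriv
    exact fun h => hqx (by rw [hq x hx, h, zero_mul])
  refine ⟨⟨q 0, hq0, hq⟩, ?_⟩
  have hmass : ∫ t in Icc (0 : ℝ) 1, q t =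
      q 0 * (Real.sqrt (Real.pi / 2) * lam * erf (1 / (Real.sqrt 2 * lam))) := by
    rw [setIntegral_congr_fun measurableSet_Icc hq, integral_Icc_eq_integral_Ioc,
      ← intervalIntegral.integral_of_le zero_le_one, intervalIntegral.integral_const_mul,
      intervalIntegral_exp_neg_sq_div_eq_erf hlam]
  have hzero := heq 0 ⟨le_rfl, zero_le_one⟩
  rw [Icc_self, integral_singleton, zero_mul, smul_zero, sub_zero, hmass] at hzero
  have hlam_q0 : lam ^ 2 * q 0 ≠ 0 := mul_ne_zero (pow_ne_zero 2 hlam) hq0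
  have herf : Real.sqrt (Real.pi / 2) * erf (1 / (Real.sqrt 2 * lam)) = 1 :=
    mul_left_cancel₀ hlam_q0 (by linear_combination -hzero)
  have hpi : Real.sqrt (Real.pi / 2) * Real.sqrt (2 / Real.pi) = 1 := by
    rw [← Real.sqrt_mul (by positivity), show Real.pi / 2 * (2 / Real.pi) = 1 by field_simp,
      Real.sqrt_one]
  linear_combination (-erf (1 / (Real.sqrt 2 * lam))) * hpi + Real.sqrt (2 / Real.pi) * herf
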